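/- (Proposition 1(i).) Let ε = (ε_1,…,ε_n) be a random vector in ℝⁿ with E ε_i = 0 and E ε_i ε_j = δ_{ij} (each ε_i square-integrable). Let r, z̃, r̃ ∈ ℝⁿ be fixed vectors with ‖r‖ = ‖z̃‖ = ‖r̃‖ = 1, ⟨r, z̃⟩ = 0, ⟨r, r̃⟩ = 0, and ⟨z̃, r̃⟩ ≠ 1. Let ε̂ = ε − ⟨ε, r⟩ r − ⟨ε, z̃⟩ z̃ and define the new residuals ê = U_{z̃,r̃} ε̂ = ε̂ − (⟨ε̂, r̃⟩/(1−⟨z̃,r̃⟩))(r̃ − z̃). Then the covariance matrix of ê is I − r rᵀ − r̃ r̃ᵀ, i.e. E ê_i ê_j = δ_{ij} − r_i r_j − r̃_i r̃_j for all i, j. -/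

import Mathlib

open scoped InnerProductSpace
open MeasureTheory

/-!
The new residuals are `ê = R (P ε)`, where `P` removes the components along the orthonormal pair
`r, z̃` and `R = U_{z̃,r̃}` is the reflection in the hyperplane orthogonal to `z̃ - r̃` (because
`‖z̃ - r̃‖² = 2 (1 - ⟪z̃, r̃⟫)`). Both are self-adjoint, so `⟪a, ê⟫ = ⟪P (R a), ε⟫`, and isotropy
of `ε` gives
  `E ⟪a, ê⟫ ⟪b, ê⟫ = ⟪P (R a), P (R b)⟫ = ⟪R a, R b⟫ - ⟪R a, r⟫ ⟪R b, r⟫ - ⟪R a, z̃⟫ ⟪R b, z̃⟫`.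
Since `R` is an isometry fixing `r` and sending `z̃` to `r̃`, this is
`⟪a, b⟫ - ⟪a, r⟫ ⟪b, r⟫ - ⟪a, r̃⟫ ⟪b, r̃⟫`.
-/

section Geometry

variable {E : Type*} [NormedAddCommGroup E] [InnerProductSpace ℝ E]

/-- The operator `U_{a,b}` of the paper; at `a = b` division by zero makes both sides `x`. -/
theorem reflection_orthogonalComplement_singleton_sub_apply {a b : E} (ha : ‖a‖ = 1)
    (hb : ‖b‖ = 1) (x : E) :
    (ℝ ∙ (a - b))ᗮ.reflection x = x - (⟪a - b, x⟫_ℝ / (1 - ⟪a, b⟫_ℝ)) • (a - b) := by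
  have hnorm : ‖a - b‖ ^ 2 = 2 * (1 - ⟪a, b⟫_ℝ) := by
    rw [norm_sub_sq_real, ha, hb]; ring
  rw [Submodule.reflection_orthogonal_apply, Submodule.reflection_singleton_apply]
  simp only [RCLike.ofReal_real_eq_id, id, hnorm, neg_sub]
  rw [← mul_div_mul_left _ (1 - ⟪a, b⟫_ℝ) (two_ne_zero' ℝ)]
  module

theorem inner_reflection_left (K : Submodule ℝ E) [K.HasOrthogonalProjection] (x y : E) :
    ⟪K.reflection x, y⟫_ℝ = ⟪x, K.reflection y⟫_ℝ :=
  K.reflection.inner_map_eq_flip x y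

def removeComponents (u v x : E) : E := x - ⟪x, u⟫_ℝ • u - ⟪x, v⟫_ℝ • v

theorem inner_removeComponents_left (u v x y : E) :
    ⟪removeComponents u v x, y⟫_ℝ = ⟪x, removeComponents u v y⟫_ℝ := by
  simp only [removeComponents, inner_sub_left, inner_sub_right, real_inner_smul_right,
    real_inner_comm]
  ring

variable {u v : E}

theorem inner_removeComponents_right (hv : ‖v‖ = 1) (huv : ⟪u, v⟫_ℝ = 0) (x : E) :
    ⟪v, removeComponents u v x⟫_ℝ = 0 := by
  simp only [removeComponents, inner_sub_right, real_inner_smul_right,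
    real_inner_self_eq_norm_sq, hv, real_inner_comm u v, huv, real_inner_comm x v]
  ring

theorem inner_removeComponents_removeComponents (hu : ‖u‖ = 1) (hv : ‖v‖ = 1)
    (huv : ⟪u, v⟫_ℝ = 0) (x y : E) :
    ⟪removeComponents u v x, removeComponents u v y⟫_ℝ
      = ⟪x, y⟫_ℝ - ⟪x, u⟫_ℝ * ⟪y, u⟫_ℝ - ⟪x, v⟫_ℝ * ⟪y, v⟫_ℝ := by
  rw [inner_removeComponents_left]
  simp only [removeComponents, inner_sub_right, real_inner_smul_right, inner_sub_left,
    real_inner_smul_left, real_inner_self_eq_norm_sq, hu, hv, real_inner_comm u v, huv]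
  ring

theorem inner_removeComponents_comp_reflection {r z w : E} (hr : ‖r‖ = 1) (hz : ‖z‖ = 1)
    (hzw : ‖z‖ = ‖w‖) (hrz : ⟪r, z⟫_ℝ = 0) (hrw : ⟪r, w⟫_ℝ = 0) (a b : E) :
    ⟪removeComponents r z ((ℝ ∙ (z - w))ᗮ.reflection a),
        removeComponents r z ((ℝ ∙ (z - w))ᗮ.reflection b)⟫_ℝ
      = ⟪a, b⟫_ℝ - ⟪a, r⟫_ℝ * ⟪b, r⟫_ℝ - ⟪a, w⟫_ℝ * ⟪b, w⟫_ℝ := by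
  have hRr : (ℝ ∙ (z - w))ᗮ.reflection r = r := by
    refine Submodule.reflection_mem_subspace_eq_self ?_
    rw [Submodule.mem_orthogonal_singleton_iff_inner_right, inner_sub_left, real_inner_comm,
      hrz, real_inner_comm, hrw, sub_zero]
  have hRz : (ℝ ∙ (z - w))ᗮ.reflection z = w := Submodule.reflection_sub hzw
  rw [inner_removeComponents_removeComponents hr hz hrz]
  simp only [LinearIsometryEquiv.inner_map_map, inner_reflection_left, hRr, hRz]

end Geometry

section RandomVector

variable {Ω ι : Type*} [MeasurableSpace Ω] {μ : Measure Ω} [Fintype ι] [DecidableEq ι]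

theorem integral_inner_mul_inner_of_isotropic {ε : Ω → EuclideanSpace ℝ ι}
    (hL2 : ∀ i, MemLp (fun ω => ε ω i) 2 μ)
    (hcov : ∀ i j, ∫ ω, ε ω i * ε ω j ∂μ = if i = j then 1 else 0)
    (a b : EuclideanSpace ℝ ι) :
    ∫ ω, ⟪a, ε ω⟫_ℝ * ⟪b, ε ω⟫_ℝ ∂μ = ⟪a, b⟫_ℝ := by
  have hint : ∀ k l, Integrable (fun ω => a k * b l * (ε ω k * ε ω l)) μ := fun k l =>
    ((hL2 k).integrable_mul (hL2 l)).const_mul _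
  have hexpand : ∀ ω, ⟪a, ε ω⟫_ℝ * ⟪b, ε ω⟫_ℝ = ∑ k, ∑ l, a k * b l * (ε ω k * ε ω l) := by
    intro ω
    simp only [PiLp.inner_apply, RCLike.inner_apply, conj_trivial, Finset.sum_mul_sum]
    exact Finset.sum_congr rfl fun k _ => Finset.sum_congr rfl fun l _ => by ring
  simp_rw [hexpand]
  rw [integral_finsetSum _ fun k _ => integrable_finsetSum _ fun l _ => hint k l]
  simp_rw [integral_finsetSum _ fun l _ => hint _ l, integral_const_mul, hcov]
  simp [PiLp.inner_apply, mul_comm]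

end RandomVector

theorem covariance_new_residuals_linear_regression_general {Ω : Type*} [MeasurableSpace Ω]
    (μ : Measure Ω) {n : ℕ}
    (ε : Ω → EuclideanSpace ℝ (Fin n))
    (hL2 : ∀ i, MemLp (fun ω => ε ω i) 2 μ)
    (hcov : ∀ i j, ∫ ω, ε ω i * ε ω j ∂μ = if i = j then 1 else 0)
    (r zt rt : EuclideanSpace ℝ (Fin n))
    (hr : ‖r‖ = 1) (hzt : ‖zt‖ = 1) (hrt : ‖rt‖ = 1)
    (hrzt : ⟪r, zt⟫_ℝ = 0) (hrrt : ⟪r, rt⟫_ℝ = 0)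
    (εhat : Ω → EuclideanSpace ℝ (Fin n))
    (hεhat : ∀ ω, εhat ω = ε ω - ⟪ε ω, r⟫_ℝ • r - ⟪ε ω, zt⟫_ℝ • zt)
    (ehat : Ω → EuclideanSpace ℝ (Fin n))
    (hehat : ∀ ω, ehat ω = εhat ω - (⟪εhat ω, rt⟫_ℝ / (1 - ⟪zt, rt⟫_ℝ)) • (rt - zt)) :
    ∀ i j, ∫ ω, ehat ω i * ehat ω j ∂μ
      = (if i = j then 1 else 0) - r i * r j - rt i * rt j := by
  set R := (ℝ ∙ (zt - rt))ᗮ.reflection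
  have hεhat_eq : ∀ ω, εhat ω = removeComponents r zt (ε ω) := hεhat
  have hehat_eq : ∀ ω, ehat ω = R (εhat ω) := by
    intro ω
    rw [hehat, reflection_orthogonalComplement_singleton_sub_apply hzt hrt, inner_sub_left,
      hεhat_eq, inner_removeComponents_right hzt hrzt, real_inner_comm]
    module
  have hcoord : ∀ k ω, ehat ω k
      = ⟪removeComponents r zt (R (EuclideanSpace.single k 1)), ε ω⟫_ℝ := by
    intro k ω
    rw [inner_removeComponents_left, inner_reflection_left, ← hεhat_eq, ← hehat_eq,
      EuclideanSpace.inner_single_left, map_one, one_mul]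
  intro i j
  simp_rw [hcoord]
  rw [integral_inner_mul_inner_of_isotropic hL2 hcov,
    inner_removeComponents_comp_reflection hr hzt (hzt.trans hrt.symm)
      hrzt hrrt]
  simp [EuclideanSpace.inner_single_left]

/-- Proposition 1(i): Let `ε` be a random vector in ℝⁿ with mean zero
and identity covariance (each coordinate square-integrable), and let `r, z̃, r̃` be
fixed unit vectors with `r ⟂ z̃`, `r ⟂ r̃`, `⟪z̃,r̃⟫ ≠ 1`. If
`ε̂ = ε − ⟪ε,r⟫ r − ⟪ε,z̃⟫ z̃` and `ê = U_{z̃,r̃} ε̂ = ε̂ − (⟪ε̂,r̃⟫/(1−⟪z̃,r̃⟫))(r̃−z̃)`,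
then the covariance matrix of `ê` is `I − r rᵀ − r̃ r̃ᵀ`. -/
theorem covariance_new_residuals_linear_regression {Ω : Type*} [MeasurableSpace Ω]
    (μ : Measure Ω) [IsProbabilityMeasure μ] {n : ℕ}
    (ε : Ω → EuclideanSpace ℝ (Fin n))
    (hL2 : ∀ i, MemLp (fun ω => ε ω i) 2 μ)
    (hmean : ∀ i, ∫ ω, ε ω i ∂μ = 0)
    (hcov : ∀ i j, ∫ ω, ε ω i * ε ω j ∂μ = if i = j then 1 else 0)
    (r zt rt : EuclideanSpace ℝ (Fin n))
    (hr : ‖r‖ = 1) (hzt : ‖zt‖ = 1) (hrt : ‖rt‖ = 1)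
    (hrzt : ⟪r, zt⟫_ℝ = 0) (hrrt : ⟪r, rt⟫_ℝ = 0) (hztrt : ⟪zt, rt⟫_ℝ ≠ 1)
    (εhat : Ω → EuclideanSpace ℝ (Fin n))
    (hεhat : ∀ ω, εhat ω = ε ω - ⟪ε ω, r⟫_ℝ • r - ⟪ε ω, zt⟫_ℝ • zt)
    (ehat : Ω → EuclideanSpace ℝ (Fin n))
    (hehat : ∀ ω, ehat ω = εhat ω - (⟪εhat ω, rt⟫_ℝ / (1 - ⟪zt, rt⟫_ℝ)) • (rt - zt)) :
    ∀ i j, ∫ ω, ehat ω i * ehat ω j ∂μ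
      = (if i = j then 1 else 0) - r i * r j - rt i * rt j :=
  covariance_new_residuals_linear_regression_general μ ε hL2 hcov r zt rt hr hzt hrt hrzt hrrt εhat
    hεhat ehat hehat
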